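/- Let M be a TRO in B(H) such that the C*-algebras A = cl-span(MM*) and B = cl-span(M*M) are both commutative. Then for every m ∈ M, the ideal of M generated by m, namely the closed linear span of MM*·m·M*M, equals the closed linear span of MM*·m (and also equals the closed linear span of m·M*M); in particular this ideal contains m and is a regular TRO. -/
import Mathlib


noncomputable section

variable {H : Type*} [NormedAddCommGroup H] [InnerProductSpace ℂ H] [CompleteSpace H]

/-- Closed linear span of a set of bounded operators. -/
def clspan (A : Set (H →L[ℂ] H)) : Set (H →L[ℂ] H) :=
  closure (Submodule.span ℂ A : Set (H →L[ℂ] H))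

/-- Set of all products `a * b` with `a ∈ A`, `b ∈ B`. -/
def pmul (A B : Set (H →L[ℂ] H)) : Set (H →L[ℂ] H) := Set.image2 (· * ·) A B

/-- The set of adjoints of elements of `A`. -/
def sstar (A : Set (H →L[ℂ] H)) : Set (H →L[ℂ] H) := star '' A

/-- `M` is a ternary ring of operators: a norm-closed linear subspace with `M M* M ⊆ M`. -/
structure IsTRO (M : Set (H →L[ℂ] H)) : Prop where
  isClosed : IsClosed M
  zero_mem : (0 : H →L[ℂ] H) ∈ M
  add_mem : ∀ x ∈ M, ∀ y ∈ M, x + y ∈ M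
  smul_mem : ∀ (c : ℂ), ∀ x ∈ M, c • x ∈ M
  mul_mem : ∀ x ∈ M, ∀ y ∈ M, ∀ z ∈ M, x * star y * z ∈ M

/-- `u` is associated to the TRO `M`:  `cl-span(M* u) = cl-span(M* M)` and
`cl-span(u M*) = cl-span(M M*)`. -/
def AssociatedTo (u : H →L[ℂ] H) (M : Set (H →L[ℂ] H)) : Prop :=
  clspan (pmul (sstar M) {u}) = clspan (pmul (sstar M) M) ∧
  clspan (pmul {u} (sstar M)) = clspan (pmul M (sstar M))


theorem ptwise1 (t δ : ℝ) (ht : 0 ≤ t) (hδ : 0 < δ) :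
    t * (1 - t^2 * ((t+δ)^2)⁻¹)^2 ≤ δ := by
  have hw4 : (0:ℝ) < ((t+δ)^2)^2 := by positivity
  have e : 1 - t^2 * ((t+δ)^2)⁻¹ = (2*t*δ + δ^2) / ((t+δ)^2) := by
    field_simp; ring
  rw [e, div_pow, ← mul_div_assoc, div_le_iff₀ hw4]
  nlinarith [mul_nonneg (sq_nonneg (t-δ)) (sq_nonneg (t+δ)),
    mul_nonneg (mul_nonneg (mul_nonneg hδ.le hδ.le) ht) ht,
    mul_nonneg (mul_nonneg (mul_nonneg hδ.le hδ.le) hδ.le) ht]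

theorem poly_approx (R ε : ℝ) (hR : 0 ≤ R) (hε : 0 < ε) :
    ∃ q : Polynomial ℝ, ∀ t ∈ Set.Icc (0:ℝ) R, |t * (1 - t^2 * q.eval t)^2| ≤ ε := by
  set δ : ℝ := ε/4 with hδ_def
  have hδ : 0 < δ := by positivity
  set η : ℝ := min 1 (ε/(4*(R^5+1))) with hη_def
  have hη : 0 < η := lt_min one_pos (by positivity)
  have hη1 : η ≤ 1 := min_le_left _ _
  have hη2 : η ≤ ε/(4*(R^5+1)) := min_le_right _ _
  -- the continuous function to approximate
  have hgc : Continuous fun t : Set.Icc (0:ℝ) R => (((t:ℝ)+δ)^2)⁻¹ := by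
    apply Continuous.inv₀
    · exact (continuous_subtype_val.add continuous_const).pow 2
    · intro x
      have hx0 : (0:ℝ) ≤ (x:ℝ) := x.2.1
      positivity
  set g : C(Set.Icc (0:ℝ) R, ℝ) := ⟨_, hgc⟩ with hg_def
  have hgmem : g ∈ closure (polynomialFunctions (Set.Icc (0:ℝ) R) : Set C(Set.Icc (0:ℝ) R, ℝ)) := by
    have h := polynomialFunctions_closure_eq_top 0 R
    have : g ∈ (polynomialFunctions (Set.Icc (0:ℝ) R)).topologicalClosure := by
      rw [h]; trivial
    exact this
  obtain ⟨p, hpmem, hpdist⟩ := Metric.mem_closure_iff.mp hgmem η hη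
  rw [polynomialFunctions_coe] at hpmem
  obtain ⟨q, rfl⟩ := hpmem
  refine ⟨q, fun t htt => ?_⟩
  have ht : 0 ≤ t := htt.1
  have htR : t ≤ R := htt.2
  set s : ℝ := ((t+δ)^2)⁻¹ with hs_def
  set u : ℝ := q.eval t with hu_def
  have h1 : |s - u| ≤ η := by
    have hd := ContinuousMap.dist_apply_le_dist (f := g)
      (g := Polynomial.toContinuousMapOnAlgHom (Set.Icc (0:ℝ) R) q) ⟨t, htt⟩
    have : dist (g ⟨t, htt⟩) ((Polynomial.toContinuousMapOnAlgHom (Set.Icc (0:ℝ) R) q) ⟨t, htt⟩) ≤ η :=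
      le_trans hd hpdist.le
    simpa [hg_def, Real.dist_eq, Polynomial.toContinuousMapOnAlgHom, Polynomial.toContinuousMapOn,
      Polynomial.toContinuousMap] using this
  have key1 : t * (1 - t^2*s)^2 ≤ δ := ptwise1 t δ ht hδ
  have hsq : (s-u)^2 ≤ η^2 := by
    have h2 := pow_le_pow_left₀ (abs_nonneg (s-u)) h1 2
    rwa [sq_abs] at h2
  have ht5 : t^5 ≤ R^5 := pow_le_pow_left₀ ht htR 5
  have hprod : t^5 * (s-u)^2 ≤ R^5 * η^2 :=
    mul_le_mul ht5 hsq (sq_nonneg _) (by positivity)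
  have main : t*(1 - t^2*u)^2 ≤ 2*(t*(1 - t^2*s)^2) + 2*(t^5*(s-u)^2) := by
    nlinarith [mul_nonneg ht (sq_nonneg ((1 - t^2*s) - t^2*(s-u)))]
  have hfin : 2*(R^5*η^2) ≤ ε/2 := by
    have hR5 : (0:ℝ) ≤ R^5 := by positivity
    have ha1 : R^5*η^2 ≤ R^5*η := by nlinarith [mul_nonneg hR5 (mul_nonneg hη.le (sub_nonneg.mpr hη1))]
    have ha2 : R^5*η ≤ R^5*(ε/(4*(R^5+1))) := mul_le_mul_of_nonneg_left hη2 hR5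
    have ha3 : R^5*(ε/(4*(R^5+1))) ≤ ε/4 := by
      rw [mul_div_assoc', div_le_div_iff₀ (by positivity) (by norm_num : (0:ℝ) < 4)]
      nlinarith
    linarith
  have habs : |t * (1 - t^2*u)^2| = t * (1 - t^2*u)^2 := abs_of_nonneg (by positivity)
  rw [habs]
  calc t*(1 - t^2*u)^2 ≤ 2*(t*(1 - t^2*s)^2) + 2*(t^5*(s-u)^2) := main
    _ ≤ 2*δ + 2*(R^5*η^2) := by nlinarith
    _ ≤ ε/2 + ε/2 := by rw [hδ_def]; linarith
    _ = ε := by ring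


theorem isClosed_clspan (A : Set (H →L[ℂ] H)) : IsClosed (clspan A) := isClosed_closure

theorem subset_clspan (A : Set (H →L[ℂ] H)) : A ⊆ clspan A :=
  fun _ hx => subset_closure (Submodule.subset_span hx)

theorem zero_mem_clspan (A : Set (H →L[ℂ] H)) : (0 : H →L[ℂ] H) ∈ clspan A :=
  subset_closure (Submodule.zero_mem _)

theorem clspan_add_mem {A : Set (H →L[ℂ] H)} {x y : H →L[ℂ] H}
    (hx : x ∈ clspan A) (hy : y ∈ clspan A) : x + y ∈ clspan A :=
  (Submodule.span ℂ A).topologicalClosure.add_mem hx hy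

theorem clspan_smul_mem {A : Set (H →L[ℂ] H)} (c : ℂ) {x : H →L[ℂ] H}
    (hx : x ∈ clspan A) : c • x ∈ clspan A :=
  (Submodule.span ℂ A).topologicalClosure.smul_mem c hx

theorem clspan_induction {A : Set (H →L[ℂ] H)} {p : (H →L[ℂ] H) → Prop}
    (hc : IsClosed {x | p x}) (h0 : p 0)
    (hadd : ∀ x y, p x → p y → p (x + y))
    (hsm : ∀ (c : ℂ), ∀ x, p x → p (c • x)) (hgen : ∀ x ∈ A, p x) :
    ∀ x ∈ clspan A, p x := by
  intro x hx
  let T : Submodule ℂ (H →L[ℂ] H) :=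
    { carrier := {x | p x}
      add_mem' := fun ha hb => hadd _ _ ha hb
      zero_mem' := h0
      smul_mem' := fun c x hx => hsm c x hx }
  have h1 : (Submodule.span ℂ A : Set (H →L[ℂ] H)) ⊆ {x | p x} :=
    fun y hy => (Submodule.span_le (p := T)).mpr hgen hy
  exact closure_minimal h1 hc hx

theorem clspan_le {A B : Set (H →L[ℂ] H)} (h : A ⊆ clspan B) : clspan A ⊆ clspan B :=
  fun x hx => clspan_induction (isClosed_clspan B) (zero_mem_clspan B)
    (fun _ _ => clspan_add_mem) (fun c _ => clspan_smul_mem c) h x hx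

theorem clspan_mono {A B : Set (H →L[ℂ] H)} (h : A ⊆ B) : clspan A ⊆ clspan B :=
  clspan_le (fun x hx => subset_clspan B (h hx))

theorem mul_mem_clspan {A B C : Set (H →L[ℂ] H)}
    (h : ∀ a ∈ A, ∀ b ∈ B, a * b ∈ clspan C) :
    ∀ a ∈ clspan A, ∀ b ∈ clspan B, a * b ∈ clspan C := by
  have step1 : ∀ b ∈ B, ∀ a ∈ clspan A, a * b ∈ clspan C := by
    intro b hb
    refine clspan_induction (p := fun a => a * b ∈ clspan C) ?_ ?_ ?_ ?_
      (fun a ha => h a ha b hb)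
    · exact (isClosed_clspan C).preimage (continuous_id.mul continuous_const)
    · simpa using zero_mem_clspan C
    · intro x y hx hy; rw [add_mul]; exact clspan_add_mem hx hy
    · intro c x hx; rw [smul_mul_assoc]; exact clspan_smul_mem c hx
  intro a ha b hb
  refine clspan_induction (p := fun b => a * b ∈ clspan C) ?_ ?_ ?_ ?_
    (fun b hb => step1 b hb a ha) b hb
  · exact (isClosed_clspan C).preimage (continuous_const.mul continuous_id)
  · simpa using zero_mem_clspan C
  · intro x y hx hy; rw [mul_add]; exact clspan_add_mem hx hy
  · intro c x hx; rw [mul_smul_comm]; exact clspan_smul_mem c hx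

theorem star_mul_mem_clspan {A B C : Set (H →L[ℂ] H)}
    (h : ∀ a ∈ A, ∀ b ∈ B, star a * b ∈ clspan C) :
    ∀ a ∈ clspan A, ∀ b ∈ clspan B, star a * b ∈ clspan C := by
  have step1 : ∀ b ∈ B, ∀ a ∈ clspan A, star a * b ∈ clspan C := by
    intro b hb
    refine clspan_induction (p := fun a => star a * b ∈ clspan C) ?_ ?_ ?_ ?_
      (fun a ha => h a ha b hb)
    · exact (isClosed_clspan C).preimage (continuous_star.mul continuous_const)
    · simpa using zero_mem_clspan C
    · intro x y hx hy; rw [star_add, add_mul]; exact clspan_add_mem hx hy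
    · intro c x hx
      have : star (c • x) * b = (star c : ℂ) • (star x * b) := by
        rw [star_smul, smul_mul_assoc]
      rw [this]; exact clspan_smul_mem _ hx
  intro a ha b hb
  refine clspan_induction (p := fun b => star a * b ∈ clspan C) ?_ ?_ ?_ ?_
    (fun b hb => step1 b hb a ha) b hb
  · exact (isClosed_clspan C).preimage (continuous_const.mul continuous_id)
  · simpa using zero_mem_clspan C
  · intro x y hx hy; rw [mul_add]; exact clspan_add_mem hx hy
  · intro c x hx; rw [mul_smul_comm]; exact clspan_smul_mem c hx

theorem mul_star_mem_clspan {A B C : Set (H →L[ℂ] H)}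
    (h : ∀ a ∈ A, ∀ b ∈ B, a * star b ∈ clspan C) :
    ∀ a ∈ clspan A, ∀ b ∈ clspan B, a * star b ∈ clspan C := by
  have step1 : ∀ a ∈ A, ∀ b ∈ clspan B, a * star b ∈ clspan C := by
    intro a ha
    refine clspan_induction (p := fun b => a * star b ∈ clspan C) ?_ ?_ ?_ ?_
      (fun b hb => h a ha b hb)
    · exact (isClosed_clspan C).preimage (continuous_const.mul continuous_star)
    · simpa using zero_mem_clspan C
    · intro x y hx hy; rw [star_add, mul_add]; exact clspan_add_mem hx hy
    · intro c x hx
      have : a * star (c • x) = (star c : ℂ) • (a * star x) := by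
        rw [star_smul, mul_smul_comm]
      rw [this]; exact clspan_smul_mem _ hx
  intro a ha b hb
  refine clspan_induction (p := fun a => a * star b ∈ clspan C) ?_ ?_ ?_ ?_
    (fun a ha => step1 a ha b hb) a ha
  · exact (isClosed_clspan C).preimage (continuous_id.mul continuous_const)
  · simpa using zero_mem_clspan C
  · intro x y hx hy; rw [add_mul]; exact clspan_add_mem hx hy
  · intro c x hx; rw [smul_mul_assoc]; exact clspan_smul_mem c hx

theorem key_approx (m : H →L[ℂ] H) :
    m ∈ clspan (Set.range fun n : ℕ => m * (star m * m) ^ (n + 2)) := by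
  rcases subsingleton_or_nontrivial H with hH | hH
  · have : m = 0 := Subsingleton.elim _ _
    rw [this]; exact zero_mem_clspan _
  set a : H →L[ℂ] H := star m * m with ha_def
  have ha : IsSelfAdjoint a := IsSelfAdjoint.star_mul_self m
  have ha0 : (0 : H →L[ℂ] H) ≤ a := star_mul_self_nonneg m
  rw [clspan, Metric.mem_closure_iff]
  intro ε hε
  obtain ⟨q, hq⟩ := poly_approx ‖a‖ (ε^2/2) (norm_nonneg a) (by positivity)
  set f : ℝ → ℝ := fun t => t^2 * q.eval t with hf_def
  have hfc : ContinuousOn f (spectrum ℝ a) :=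
    ((continuous_pow 2).mul q.continuous).continuousOn
  set c : H →L[ℂ] H := cfc f a with hc_def
  have hcsa : IsSelfAdjoint c := cfc_predicate f a
  have hc : c = a ^ 2 * Polynomial.aeval a q := by
    rw [hc_def, hf_def,
      cfc_mul (fun t : ℝ => t^2) (fun t => q.eval t) a (by fun_prop) q.continuous.continuousOn,
      cfc_pow_id a 2, cfc_polynomial q a]
  have hmem : ∀ p : Polynomial ℝ, m * (a ^ 2 * Polynomial.aeval a p) ∈
      (Submodule.span ℂ (Set.range fun n : ℕ => m * (star m * m) ^ (n + 2)) : Set (H →L[ℂ] H)) := by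
    intro p
    induction p using Polynomial.induction_on' with
    | add p₁ p₂ hp₁ hp₂ =>
      rw [map_add, mul_add, mul_add]
      exact Submodule.add_mem _ hp₁ hp₂
    | monomial n r =>
      have e1 : m * (a ^ 2 * Polynomial.aeval a (Polynomial.monomial n r))
          = r • (m * a ^ (n + 2)) := by
        rw [Polynomial.aeval_monomial, Algebra.algebraMap_eq_smul_one]
        rw [smul_mul_assoc, one_mul, mul_smul_comm, mul_smul_comm, ← pow_add]
        rw [Nat.add_comm 2 n]
      rw [e1, ← ha_def]
      exact Submodule.smul_of_tower_mem _ r (Submodule.subset_span ⟨n, rfl⟩)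
  refine ⟨m * c, ?_, ?_⟩
  · rw [hc]; exact hmem q
  · -- distance estimate
    rw [dist_eq_norm]
    have expand : star (m - m * c) * (m - m * c) = a - c * a - a * c + c * (a * c) := by
      simp only [star_sub, star_mul, hcsa.star_eq, ha_def]
      noncomm_ring
    have heq : a - c * a - a * c + c * (a * c)
        = cfc (fun t : ℝ => t * (1 - t^2 * q.eval t)^2) a := by
      have hid : ContinuousOn (fun t : ℝ => t) (spectrum ℝ a) := continuous_id.continuousOn
      have e0 : a = cfc (fun t : ℝ => t) a := (cfc_id' ℝ a).symm
      have h2 : c * a = cfc (fun t => f t * t) a := by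
        rw [cfc_mul f (fun t => t) a hfc hid, hc_def, cfc_id' ℝ a]
      have h3 : a * c = cfc (fun t => t * f t) a := by
        rw [cfc_mul (fun t => t) f a hid hfc, hc_def, cfc_id' ℝ a]
      have h4 : c * (a * c) = cfc (fun t => f t * (t * f t)) a := by
        rw [cfc_mul f (fun t => t * f t) a hfc (hid.mul hfc), hc_def, ← h3, hc_def]
      rw [h4, h2, h3]
      nth_rewrite 1 [e0]
      rw [← cfc_sub (fun t : ℝ => t) (fun t => f t * t) a hid (hfc.mul hid)]
      rw [← cfc_sub (fun t : ℝ => t - f t * t) (fun t => t * f t) a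
        (hid.sub (hfc.mul hid)) (hid.mul hfc)]
      rw [← cfc_add a (fun t : ℝ => t - f t * t - t * f t) (fun t => f t * (t * f t))
        ((hid.sub (hfc.mul hid)).sub (hid.mul hfc)) (hfc.mul (hid.mul hfc))]
      congr 1
      funext t
      simp only [hf_def]
      ring
    have hnorm : ‖star (m - m * c) * (m - m * c)‖ ≤ ε^2/2 := by
      rw [expand, heq]
      refine norm_cfc_le (by positivity) ?_
      intro x hx
      have hx0 : 0 ≤ x := spectrum_nonneg_of_nonneg ha0 hx
      have hx1 : x ≤ ‖a‖ := by
        have := spectrum.norm_le_norm_of_mem hx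
        rwa [Real.norm_eq_abs, abs_of_nonneg hx0] at this
      rw [Real.norm_eq_abs]
      exact hq x ⟨hx0, hx1⟩
    have hns : ‖m - m * c‖ * ‖m - m * c‖ ≤ ε^2/2 := by
      rw [← CStarRing.norm_star_mul_self]
      exact hnorm
    nlinarith [norm_nonneg (m - m * c), hε]


theorem mem_pmul {A B : Set (H →L[ℂ] H)} {a b : H →L[ℂ] H} (ha : a ∈ A) (hb : b ∈ B) :
    a * b ∈ pmul A B := ⟨a, ha, b, hb, rfl⟩

theorem mem_sstar {A : Set (H →L[ℂ] H)} {a : H →L[ℂ] H} (ha : a ∈ A) :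
    star a ∈ sstar A := ⟨a, ha, rfl⟩

/-- If the C*-algebras `cl-span(M M*)` and `cl-span(M* M)` are commutative, then for every
`m ∈ M` the ideal generated by `m`, namely `cl-span(M M* · m · M* M)`, equals
`cl-span(M M* · m)` and `cl-span(m · M* M)`; it contains `m` and is a regular TRO. -/
theorem stmt9 {M : Set (H →L[ℂ] H)} (hM : IsTRO M)
    (hA : ∀ a ∈ clspan (pmul M (sstar M)), ∀ b ∈ clspan (pmul M (sstar M)), a * b = b * a)
    (hB : ∀ a ∈ clspan (pmul (sstar M) M), ∀ b ∈ clspan (pmul (sstar M) M), a * b = b * a)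
    (m : H →L[ℂ] H) (hm : m ∈ M) :
    clspan (pmul (pmul (pmul M (sstar M)) {m}) (pmul (sstar M) M))
        = clspan (pmul (pmul M (sstar M)) {m}) ∧
    clspan (pmul (pmul (pmul M (sstar M)) {m}) (pmul (sstar M) M))
        = clspan (pmul {m} (pmul (sstar M) M)) ∧
    m ∈ clspan (pmul (pmul (pmul M (sstar M)) {m}) (pmul (sstar M) M)) ∧
    ∃ u : H →L[ℂ] H,
      AssociatedTo u (clspan (pmul (pmul (pmul M (sstar M)) {m}) (pmul (sstar M) M))) := by
  have hB' : ∀ b1 ∈ pmul (sstar M) M, ∀ b2 ∈ pmul (sstar M) M, b1 * b2 = b2 * b1 :=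
    fun b1 h1 b2 h2 => hB b1 (subset_clspan _ h1) b2 (subset_clspan _ h2)
  have hA' : ∀ a1 ∈ pmul M (sstar M), ∀ a2 ∈ pmul M (sstar M), a1 * a2 = a2 * a1 :=
    fun a1 h1 a2 h2 => hA a1 (subset_clspan _ h1) a2 (subset_clspan _ h2)
  -- pointwise structure facts about the generating set of the ideal
  have hIdest : ∀ i ∈ pmul (pmul (pmul M (sstar M)) {m}) (pmul (sstar M) M),
      ∃ x ∈ M, ∃ y ∈ M, ∃ z ∈ M, ∃ w ∈ M, ((x * star y) * m) * (star z * w) = i := by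
    intro i hi
    obtain ⟨l, hl, b, hb, rfl⟩ := hi
    obtain ⟨c, hc, m', hm', rfl⟩ := hl
    obtain ⟨x, hx, sy, hsy, rfl⟩ := hc
    obtain ⟨y, hy, rfl⟩ := hsy
    obtain ⟨sz, hsz, w, hw, rfl⟩ := hb
    obtain ⟨z, hz, rfl⟩ := hsz
    rw [Set.mem_singleton_iff] at hm'
    subst hm'
    exact ⟨x, hx, y, hy, z, hz, w, hw, rfl⟩
  have hLdest : ∀ l ∈ pmul (pmul M (sstar M)) {m},
      ∃ x ∈ M, ∃ y ∈ M, (x * star y) * m = l := by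
    intro l hl
    obtain ⟨c, hc, m', hm', rfl⟩ := hl
    obtain ⟨x, hx, sy, hsy, rfl⟩ := hc
    obtain ⟨y, hy, rfl⟩ := hsy
    rw [Set.mem_singleton_iff] at hm'
    subst hm'
    exact ⟨x, hx, y, hy, rfl⟩
  have hIL : pmul (pmul (pmul M (sstar M)) {m}) (pmul (sstar M) M)
      ⊆ pmul (pmul M (sstar M)) {m} := by
    intro i hi
    obtain ⟨x, hx, y, hy, z, hz, w, hw, rfl⟩ := hIdest i hi
    have hcomm := hB' (star y * m) (mem_pmul (mem_sstar hy) hm)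
      (star z * w) (mem_pmul (mem_sstar hz) hw)
    have e : ((x * star y) * m) * (star z * w) = ((x * star z * w) * star y) * m := by
      calc ((x * star y) * m) * (star z * w)
          = x * ((star y * m) * (star z * w)) := by simp [mul_assoc]
        _ = x * ((star z * w) * (star y * m)) := by rw [hcomm]
        _ = ((x * star z * w) * star y) * m := by simp [mul_assoc]
    rw [e]
    exact mem_pmul (mem_pmul (hM.mul_mem x hx z hz w hw) (mem_sstar hy)) rfl
  have hIR : pmul (pmul (pmul M (sstar M)) {m}) (pmul (sstar M) M)
      ⊆ pmul {m} (pmul (sstar M) M) := by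
    intro i hi
    obtain ⟨x, hx, y, hy, z, hz, w, hw, rfl⟩ := hIdest i hi
    have hcomm := hA' (x * star y) (mem_pmul hx (mem_sstar hy))
      (m * star z) (mem_pmul hm (mem_sstar hz))
    have e : ((x * star y) * m) * (star z * w) = m * (star z * (x * star y * w)) := by
      calc ((x * star y) * m) * (star z * w)
          = ((x * star y) * (m * star z)) * w := by simp [mul_assoc]
        _ = ((m * star z) * (x * star y)) * w := by rw [hcomm]
        _ = m * (star z * (x * star y * w)) := by simp [mul_assoc]
    rw [e]
    exact mem_pmul rfl (mem_pmul (mem_sstar hz) (hM.mul_mem x hx y hy w hw))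
  have hLabs : ∀ c ∈ pmul M (sstar M),
      ∀ i ∈ pmul (pmul (pmul M (sstar M)) {m}) (pmul (sstar M) M),
      c * i ∈ pmul (pmul (pmul M (sstar M)) {m}) (pmul (sstar M) M) := by
    intro c hc i hi
    obtain ⟨x0, hx0, sy0, hsy0, rfl⟩ := hc
    obtain ⟨y0, hy0, rfl⟩ := hsy0
    obtain ⟨x, hx, y, hy, z, hz, w, hw, rfl⟩ := hIdest i hi
    have e : (x0 * star y0) * (((x * star y) * m) * (star z * w))
        = (((x0 * star y0 * x) * star y) * m) * (star z * w) := by simp [mul_assoc]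
    rw [e]
    exact mem_pmul (mem_pmul (mem_pmul (hM.mul_mem x0 hx0 y0 hy0 x hx) (mem_sstar hy)) rfl)
      (mem_pmul (mem_sstar hz) hw)
  have hRabs : ∀ i ∈ pmul (pmul (pmul M (sstar M)) {m}) (pmul (sstar M) M),
      ∀ b ∈ pmul (sstar M) M,
      i * b ∈ pmul (pmul (pmul M (sstar M)) {m}) (pmul (sstar M) M) := by
    intro i hi b hb
    obtain ⟨x, hx, y, hy, z, hz, w, hw, rfl⟩ := hIdest i hi
    obtain ⟨sz', hsz', w', hw', rfl⟩ := hb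
    obtain ⟨z', hz', rfl⟩ := hsz'
    have e : (((x * star y) * m) * (star z * w)) * (star z' * w')
        = ((x * star y) * m) * (star z * (w * star z' * w')) := by simp [mul_assoc]
    rw [e]
    exact mem_pmul (mem_pmul (mem_pmul hx (mem_sstar hy)) rfl)
      (mem_pmul (mem_sstar hz) (hM.mul_mem w hw z' hz' w' hw'))
  have hpowM : ∀ n : ℕ, m * (star m * m) ^ n ∈ M := by
    intro n
    induction n with
    | zero => simpa using hm
    | succ k ih =>
      have e : m * (star m * m) ^ (k + 1) = m * star m * (m * (star m * m) ^ k) := by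
        rw [pow_succ']; simp [mul_assoc]
      rw [e]
      exact hM.mul_mem m hm m hm _ ih
  have hSI : (Set.range fun n : ℕ => m * (star m * m) ^ (n + 2))
      ⊆ pmul (pmul (pmul M (sstar M)) {m}) (pmul (sstar M) M) := by
    rintro _ ⟨n, rfl⟩
    show m * (star m * m) ^ (n + 2) ∈ _
    have e : m * (star m * m) ^ (n + 2)
        = ((m * star m) * m) * (star m * (m * (star m * m) ^ n)) := by
      rw [pow_succ', pow_succ']; simp [mul_assoc]
    rw [e]
    exact mem_pmul (mem_pmul (mem_pmul hm (mem_sstar hm)) rfl)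
      (mem_pmul (mem_sstar hm) (hpowM n))
  have hmN : m ∈ clspan (pmul (pmul (pmul M (sstar M)) {m}) (pmul (sstar M) M)) :=
    clspan_mono hSI (key_approx m)
  have eq1 : clspan (pmul (pmul (pmul M (sstar M)) {m}) (pmul (sstar M) M))
      = clspan (pmul (pmul M (sstar M)) {m}) := by
    apply subset_antisymm (clspan_mono hIL)
    apply clspan_le
    intro l hl
    obtain ⟨c, hc, m', hm', rfl⟩ := hl
    rw [show m' = m from hm']
    refine mul_mem_clspan (A := {c}) ?_ c (subset_clspan _ rfl) m hmN
    intro a ha i hi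
    rw [Set.mem_singleton_iff] at ha
    subst ha
    exact subset_clspan _ (hLabs a hc i hi)
  have eq2 : clspan (pmul (pmul (pmul M (sstar M)) {m}) (pmul (sstar M) M))
      = clspan (pmul {m} (pmul (sstar M) M)) := by
    apply subset_antisymm (clspan_mono hIR)
    apply clspan_le
    intro r hr
    obtain ⟨m', hm', b, hb, rfl⟩ := hr
    rw [show m' = m from hm']
    refine mul_mem_clspan (B := {b}) ?_ m hmN b (subset_clspan _ rfl)
    intro i hi b' hb'
    rw [Set.mem_singleton_iff] at hb'
    subst hb'
    exact subset_clspan _ (hRabs i hi b' hb)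
  refine ⟨eq1, eq2, hmN, m, ?_, ?_⟩
  · -- cl-span(N* m) = cl-span(N* N)
    apply subset_antisymm
    · apply clspan_le
      intro x hx
      obtain ⟨s, hs, m', hm', rfl⟩ := hx
      rw [show m' = m from hm']
      exact subset_clspan _ (mem_pmul hs hmN)
    · apply clspan_le
      intro x hx
      obtain ⟨s, hs, n2, hn2, rfl⟩ := hx
      obtain ⟨n1, hn1, rfl⟩ := hs
      have hn1' : n1 ∈ clspan (pmul (pmul M (sstar M)) {m}) := eq1 ▸ hn1
      have hn2' : n2 ∈ clspan (pmul (pmul M (sstar M)) {m}) := eq1 ▸ hn2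
      refine star_mul_mem_clspan ?_ n1 hn1' n2 hn2'
      intro l1 hl1 l2 hl2
      obtain ⟨x, hx', y, hy, rfl⟩ := hLdest l1 hl1
      obtain ⟨z, hz, w, hw, rfl⟩ := hLdest l2 hl2
      have e : star ((x * star y) * m) * ((z * star w) * m)
          = star (((w * star z * x) * star y) * m) * m := by
        simp [star_mul, star_star, mul_assoc]
      rw [e]
      refine subset_clspan _ (mem_pmul (mem_sstar ?_) rfl)
      exact eq1 ▸ subset_clspan _
        (mem_pmul (mem_pmul (hM.mul_mem w hw z hz x hx') (mem_sstar hy)) rfl)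
  · -- cl-span(m N*) = cl-span(N N*)
    apply subset_antisymm
    · apply clspan_le
      intro x hx
      obtain ⟨m', hm', s, hs, rfl⟩ := hx
      rw [show m' = m from hm']
      exact subset_clspan _ (mem_pmul hmN hs)
    · apply clspan_le
      intro x hx
      obtain ⟨n1, hn1, s, hs, rfl⟩ := hx
      obtain ⟨n2, hn2, rfl⟩ := hs
      have hn1' : n1 ∈ clspan (pmul (pmul M (sstar M)) {m}) := eq1 ▸ hn1
      have hn2' : n2 ∈ clspan (pmul (pmul M (sstar M)) {m}) := eq1 ▸ hn2
      refine mul_star_mem_clspan ?_ n1 hn1' n2 hn2'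
      intro l1 hl1 l2 hl2
      obtain ⟨x, hx', y, hy, rfl⟩ := hLdest l1 hl1
      obtain ⟨z, hz, w, hw, rfl⟩ := hLdest l2 hl2
      have hcomm := hA' (x * star y) (mem_pmul hx' (mem_sstar hy))
        (m * star m) (mem_pmul hm (mem_sstar hm))
      have e : ((x * star y) * m) * star ((z * star w) * m)
          = m * star ((z * star (x * star y * w)) * m) := by
        have h1 : ((x * star y) * m) * star ((z * star w) * m)
            = ((x * star y) * (m * star m)) * (w * star z) := by
          simp [star_mul, star_star, mul_assoc]
        rw [h1, hcomm]
        simp [star_mul, star_star, mul_assoc]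
      rw [e]
      refine subset_clspan _ (mem_pmul rfl (mem_sstar ?_))
      exact eq1 ▸ subset_clspan _
        (mem_pmul (mem_pmul hz (mem_sstar (hM.mul_mem x hx' y hy w hw))) rfl)
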